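/- arXiv:2112.03129 — 3 statements merged into one kernel-verified Lean document; each statement's English description precedes it below -/
import Mathlib

section
/- Let F : M_n(ℂ) → M_m(ℂ) be a UCP map, let ρ ∈ M_m(ℂ) be a density matrix with state ω = tr(ρ·), let σ ∈ M_n(ℂ) be the density matrix of ξ := ω∘F, and let Q be the support projection of σ. Let F† : M_m(ℂ) → M_n(ℂ) denote the Hilbert–Schmidt adjoint of F, characterized by tr(F(B)*·A) = tr(B*·F†(A)) for all A, B. Let G^L, G^R : M_m(ℂ) → M_n(ℂ) be unital linear maps satisfying the left and right Bayes conditions tr(ρ·A·F(B)) = tr(σ·G^L(A)·B) and tr(ρ·F(B)·A) = tr(σ·B·G^R(A)) for all A, B (such maps exist). Then the following are equivalent: (i) the map A ↦ Q·G^R(A)·Q is star-preserving, i.e., (Q·G^R(A)·Q)* = Q·G^R(A*)·Q for all A; (ii) Q·G^L(A)·Q = Q·G^R(A)·Q for all A; (iii) Q·F†(ρA)·σ = σ·F†(Aρ)·Q for all A ∈ M_m(ℂ); (iv) F(σ·QBQ)·ρ = ρ·F(QBQ·σ) for all B ∈ M_n(ℂ); (v) the map A ↦ Q·G^R(A)·Q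 is completely positive. -/
open Matrix ComplexOrder

/-- The `k`-th amplification `id_{M_k(ℂ)} ⊗ Φ` of a map `Φ` between matrix algebras. -/
def amplify {n m : Type*} (Φ : Matrix n n ℂ → Matrix m m ℂ) (k : ℕ)
    (M : Matrix (Fin k × n) (Fin k × n) ℂ) : Matrix (Fin k × m) (Fin k × m) ℂ :=
  Matrix.of fun p q => Φ (Matrix.of fun a b => M (p.1, a) (q.1, b)) p.2 q.2

/-- Complete positivity: all amplifications preserve positive semidefiniteness. -/
def IsCP {n m : Type*} [Fintype n] [Fintype m] (Φ : Matrix n n ℂ → Matrix m m ℂ) : Prop :=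
  ∀ (k : ℕ) (M : Matrix (Fin k × n) (Fin k × n) ℂ), M.PosSemidef → (amplify Φ k M).PosSemidef

/-- `P` is the support projection of `σ`: the orthogonal projection (Hermitian idempotent)
whose range equals the range of `σ`. -/
def IsSupportProj {n : Type*} [Fintype n] [DecidableEq n] (P σ : Matrix n n ℂ) : Prop :=
  P.IsHermitian ∧ P * P = P ∧ LinearMap.range P.mulVecLin = LinearMap.range σ.mulVecLin

/-!
Trace duality turns the Bayes conditions into `σ * G^L(A) = F†(ρ * A)` and
`G^R(A) * σ = F†(A * ρ)`; here `F†` is the trace dual of `F`, and `F` is star-preserving because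
it is positive. Since `Q * σ = σ = σ * Q` and `Q = σ * σ⁺` for the pseudo-inverse `σ⁺`,
compressing by `Q` makes (ii), (iii) and (iv) each equivalent to the modular identity
`F(σ * B) * ρ = ρ * F(B * σ)` for all `B`, while (i) ⟺ (ii) because
`(Q * G^L(A) * Q)ᴴ = Q * G^R(Aᴴ) * Q`.

For (iv) ⟹ (v): in eigenbases `σ = ∑ q_c e_cc` and `ρ = ∑ p_a e_aa`, the modular identity says
that the `(a, b)` entry of `F(e_cj)` vanishes unless `q_c * p_b = q_j * p_a`. On those entries,
`p_a / q_c = √(p_a p_b / (q_c q_j))`, which gives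
`Q * G^R(A) * Q = σ^{-1/2} * F†(ρ^{1/2} * A * ρ^{1/2}) * σ^{-1/2}`. This is a compression of `F†`,
which is completely positive as the trace dual of a CP map. Conversely, a CP map is positive,
hence star-preserving, which is (i).
-/

section Positivity

variable {ι κ : Type*} [Fintype ι]

theorem IsCP.posSemidef_map [Fintype κ] {Φ : Matrix ι ι ℂ → Matrix κ κ ℂ} (hΦ : IsCP Φ)
    {A : Matrix ι ι ℂ} (hA : A.PosSemidef) : (Φ A).PosSemidef := by
  have h := (hΦ 1 _ (hA.submatrix Prod.snd)).submatrix (fun i => ((0 : Fin 1), i))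
  convert h using 1
  ext i j
  rfl

theorem map_star_of_map_isSelfAdjoint {E F : Type*} [AddCommGroup E] [Module ℂ E]
    [StarAddMonoid E] [StarModule ℂ E] [AddCommGroup F] [Module ℂ F] [StarAddMonoid F]
    [StarModule ℂ F] (Φ : E →ₗ[ℂ] F) (hΦ : ∀ x, IsSelfAdjoint x → IsSelfAdjoint (Φ x)) (a : E) :
    Φ (star a) = star (Φ a) := by
  open ComplexStarModule in
  conv_lhs => rw [← realPart_add_I_smul_imaginaryPart a]
  conv_rhs => rw [← realPart_add_I_smul_imaginaryPart a]
  simp [star_smul, (hΦ _ (ℜ a).2).star_eq, (hΦ _ (ℑ a).2).star_eq, (ℜ a).2.star_eq,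
    (ℑ a).2.star_eq]

open scoped MatrixOrder in
theorem Matrix.map_conjTranspose_of_posSemidef [DecidableEq ι]
    (Φ : Matrix ι ι ℂ →ₗ[ℂ] Matrix κ κ ℂ) (hΦ : ∀ A, A.PosSemidef → (Φ A).PosSemidef)
    (A : Matrix ι ι ℂ) : Φ Aᴴ = (Φ A)ᴴ := by
  refine map_star_of_map_isSelfAdjoint Φ (fun H hH => ?_) A
  rw [← CFC.posPart_sub_negPart H hH, map_sub]
  exact ((hΦ _ (nonneg_iff_posSemidef.mp (CFC.posPart_nonneg H))).1.sub
    (hΦ _ (nonneg_iff_posSemidef.mp (CFC.negPart_nonneg H))).1)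

open scoped MatrixOrder in
theorem Matrix.PosSemidef.trace_mul_nonneg [DecidableEq ι] {A B : Matrix ι ι ℂ}
    (hA : A.PosSemidef) (hB : B.PosSemidef) : 0 ≤ (A * B).trace := by
  obtain ⟨C, rfl⟩ := CStarAlgebra.nonneg_iff_eq_star_mul_self.mp hB.nonneg
  rw [← mul_assoc, trace_mul_comm, ← mul_assoc]
  exact (hA.mul_mul_conjTranspose_same C).trace_nonneg

theorem IsCP.map_conjTranspose [DecidableEq ι] [Fintype κ]
    {Φ : Matrix ι ι ℂ →ₗ[ℂ] Matrix κ κ ℂ} (hΦ : IsCP Φ) (A : Matrix ι ι ℂ) : Φ Aᴴ = (Φ A)ᴴ :=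
  map_conjTranspose_of_posSemidef Φ (fun _ => hΦ.posSemidef_map) A

end Positivity

section Amplification

open scoped Kronecker

variable {ι κ : Type*} [Fintype ι] [Fintype κ] {k : ℕ}

theorem of_one_kronecker_mul_mul_one_kronecker (C G : Matrix κ κ ℂ)
    (X : Matrix (Fin k × κ) (Fin k × κ) ℂ) (a b : Fin k) :
    (Matrix.of fun i j =>
      ((1 ⊗ₖ C) * X * (1 ⊗ₖ G) : Matrix (Fin k × κ) (Fin k × κ) ℂ) (a, i) (b, j)) =
      C * (Matrix.of fun i j => X (a, i) (b, j)) * G := by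
  ext i j
  simp [mul_apply, Fintype.sum_prod_type, one_apply, ite_mul, Finset.sum_mul]

theorem amplify_conj (Φ : Matrix ι ι ℂ → Matrix κ κ ℂ) (C G : Matrix κ κ ℂ)
    (D E : Matrix ι ι ℂ) (M : Matrix (Fin k × ι) (Fin k × ι) ℂ) :
    amplify (fun A => C * Φ (D * A * E) * G) k M =
      (1 ⊗ₖ C) * amplify Φ k ((1 ⊗ₖ D) * M * (1 ⊗ₖ E)) * (1 ⊗ₖ G) := by
  ext p q
  have h := congrFun (congrFun (of_one_kronecker_mul_mul_one_kronecker C G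
    (amplify Φ k ((1 ⊗ₖ D) * M * (1 ⊗ₖ E))) p.1 q.1) p.2) q.2
  simp only [amplify, of_apply, of_one_kronecker_mul_mul_one_kronecker] at h ⊢
  exact h.symm

theorem IsCP.conjTranspose_mul_map_mul {Φ : Matrix ι ι ℂ → Matrix κ κ ℂ} (hΦ : IsCP Φ)
    (C : Matrix κ κ ℂ) (D : Matrix ι ι ℂ) : IsCP (fun A => Cᴴ * Φ (Dᴴ * A * D) * C) := by
  intro k M hM
  have h := (hΦ k _ (hM.conjTranspose_mul_mul_same (1 ⊗ₖ D))).conjTranspose_mul_mul_same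
    (1 ⊗ₖ C : Matrix (Fin k × κ) (Fin k × κ) ℂ)
  rwa [conjTranspose_kronecker, conjTranspose_kronecker, conjTranspose_one, ← amplify_conj] at h

omit [Fintype ι] [Fintype κ] in
theorem amplify_isHermitian {Φ : Matrix ι ι ℂ → Matrix κ κ ℂ} (hΦ : ∀ A, Φ Aᴴ = (Φ A)ᴴ)
    {M : Matrix (Fin k × ι) (Fin k × ι) ℂ} (hM : M.IsHermitian) :
    (amplify Φ k M).IsHermitian := by
  ext p q
  have hblock : (Matrix.of fun i j => M (q.1, i) (p.1, j)) =
      (Matrix.of fun i j => M (p.1, i) (q.1, j))ᴴ := by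
    ext i j
    rw [conjTranspose_apply, of_apply, of_apply, ← conjTranspose_apply M, hM.eq]
  simp only [amplify, conjTranspose_apply, of_apply, hblock, hΦ, star_star]

theorem trace_mul_eq_sum_blocks (Y : Matrix (Fin k × ι) (Fin k × κ) ℂ)
    (Z : Matrix (Fin k × κ) (Fin k × ι) ℂ) : (Y * Z).trace = ∑ a, ∑ b,
      ((Matrix.of fun i j => Y (a, i) (b, j)) * (Matrix.of fun i j => Z (b, i) (a, j))).trace := by
  simp only [trace, diag, mul_apply, Fintype.sum_prod_type, of_apply]
  exact Finset.sum_congr rfl fun a _ => Finset.sum_comm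

theorem trace_amplify_mul {Φ : Matrix ι ι ℂ → Matrix κ κ ℂ} {Ψ : Matrix κ κ ℂ → Matrix ι ι ℂ}
    (hdual : ∀ A B, (Φ B * A).trace = (B * Ψ A).trace) (X : Matrix (Fin k × ι) (Fin k × ι) ℂ)
    (M : Matrix (Fin k × κ) (Fin k × κ) ℂ) :
    (amplify Φ k X * M).trace = (X * amplify Ψ k M).trace := by
  rw [trace_mul_eq_sum_blocks, trace_mul_eq_sum_blocks]
  exact Finset.sum_congr rfl fun a _ => Finset.sum_congr rfl fun b _ =>
    hdual (Matrix.of fun i j => M (b, i) (a, j)) (Matrix.of fun i j => X (a, i) (b, j))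

theorem IsCP.of_trace_dual [DecidableEq κ] {Φ : Matrix ι ι ℂ → Matrix κ κ ℂ}
    {Ψ : Matrix κ κ ℂ → Matrix ι ι ℂ} (hΦ : IsCP Φ) (hΨ : ∀ A, Ψ Aᴴ = (Ψ A)ᴴ)
    (hdual : ∀ A B, (Φ B * A).trace = (B * Ψ A).trace) : IsCP Ψ := by
  intro k M hM
  refine .of_dotProduct_mulVec_nonneg (amplify_isHermitian hΨ hM.1) fun x => ?_
  rw [dotProduct_comm, ← trace_vecMulVec, ← mul_vecMulVec, trace_mul_comm,
    ← trace_amplify_mul hdual]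
  exact (hΦ k _ (posSemidef_vecMulVec_self_star x)).trace_mul_nonneg hM

end Amplification

section SupportProjection

theorem Matrix.mul_eq_of_range_le {R l m n : Type*} [CommSemiring R] [Fintype l] [Fintype m]
    [Fintype n] {P : Matrix l l R} {N : Matrix l m R} {M : Matrix l n R} (hPN : P * N = N)
    (h : LinearMap.range M.mulVecLin ≤ LinearMap.range N.mulVecLin) : P * M = M := by
  refine ext_iff_mulVec.mpr fun v => ?_
  obtain ⟨w, hw⟩ := h ⟨v, rfl⟩
  simp only [mulVecLin_apply] at hw
  rw [← mulVec_mulVec, ← hw, mulVec_mulVec, hPN]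

variable {ι : Type*} [Fintype ι] [DecidableEq ι] {Q σ : Matrix ι ι ℂ}

theorem IsSupportProj.mul_self_eq (hQ : IsSupportProj Q σ) : Q * σ = σ :=
  mul_eq_of_range_le hQ.2.1 hQ.2.2.ge

theorem IsSupportProj.self_mul_eq (hQ : IsSupportProj Q σ) (hσ : σ.IsHermitian) : σ * Q = σ := by
  simpa [hσ.eq, hQ.1.eq] using congrArg conjTranspose hQ.mul_self_eq

-- Because `0⁻¹ = 0` in `ℝ`, `cfc (·⁻¹) σ` is the Moore–Penrose pseudo-inverse of `σ`.
theorem IsSupportProj.mul_cfc_inv_eq (hQ : IsSupportProj Q σ) (hσ : σ.IsHermitian) :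
    σ * cfc (·⁻¹ : ℝ → ℝ) σ = Q := by
  set P := σ * cfc (·⁻¹ : ℝ → ℝ) σ
  have hP : P = cfc (fun x : ℝ => x * x⁻¹) σ := by
    rw [cfc_mul (fun x : ℝ => x) (·⁻¹) σ (by fun_prop) (σ.finite_real_spectrum.continuousOn _),
      cfc_id' ℝ σ]
  have hPσ : P * σ = σ := by
    calc P * σ = cfc (fun x : ℝ => x * x⁻¹) σ * cfc (fun x : ℝ => x) σ := by rw [hP, cfc_id' ℝ σ]
      _ = cfc (fun x : ℝ => x * x⁻¹ * x) σ :=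
        (cfc_mul _ _ σ (σ.finite_real_spectrum.continuousOn _) (by fun_prop)).symm
      _ = σ := by rw [cfc_congr fun x _ => mul_inv_mul_cancel x, cfc_id' ℝ σ]
  have hPh : Pᴴ = P := by rw [hP]; exact IsSelfAdjoint.cfc
  have hQP : Q * P = P := by rw [← mul_assoc, hQ.mul_self_eq]
  have hPQ : P * Q = Q := mul_eq_of_range_le hPσ hQ.2.2.le
  calc P = (Q * P)ᴴ := by rw [hQP, hPh]
    _ = Q := by rw [conjTranspose_mul, hPh, hQ.1.eq, hPQ]

theorem IsSupportProj.cfc_inv_mul_eq (hQ : IsSupportProj Q σ) (hσ : σ.IsHermitian) :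
    cfc (·⁻¹ : ℝ → ℝ) σ * σ = Q := by
  have hτ : (cfc (·⁻¹ : ℝ → ℝ) σ)ᴴ = cfc (·⁻¹ : ℝ → ℝ) σ := IsSelfAdjoint.cfc
  simpa [hσ.eq, hQ.1.eq, hτ] using congrArg conjTranspose (hQ.mul_cfc_inv_eq hσ)

theorem IsSupportProj.mul_mul_eq_iff (hQ : IsSupportProj Q σ) (hσ : σ.IsHermitian)
    (X Y : Matrix ι ι ℂ) : σ * X * σ = σ * Y * σ ↔ Q * X * Q = Q * Y * Q := by
  have hσZ (Z : Matrix ι ι ℂ) : σ * (Q * Z * Q) * σ = σ * Z * σ := by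
    calc σ * (Q * Z * Q) * σ = (σ * Q) * Z * (Q * σ) := by simp only [mul_assoc]
      _ = σ * Z * σ := by rw [hQ.self_mul_eq hσ, hQ.mul_self_eq]
  have hQZ (Z : Matrix ι ι ℂ) :
      cfc (·⁻¹ : ℝ → ℝ) σ * (σ * Z * σ) * cfc (·⁻¹ : ℝ → ℝ) σ = Q * Z * Q := by
    calc _ = (cfc (·⁻¹ : ℝ → ℝ) σ * σ) * Z * (σ * cfc (·⁻¹ : ℝ → ℝ) σ) := by
          simp only [mul_assoc]
      _ = Q * Z * Q := by rw [hQ.cfc_inv_mul_eq hσ, hQ.mul_cfc_inv_eq hσ]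
  exact ⟨fun h => by rw [← hQZ, h, hQZ], fun h => by rw [← hσZ, h, hσZ]⟩

end SupportProjection

theorem inv_mul_mul_eq_inv_sqrt_mul_of_mul_eq {qc qj pa pb : ℝ} (hqc : 0 ≤ qc) (hqj : 0 ≤ qj)
    (hpa : 0 ≤ pa) (h : qc * pb = qj * pa) :
    qc⁻¹ * (qj * qj⁻¹ * pa) = (√qc)⁻¹ * ((√qj)⁻¹ * (√pa * √pb)) := by
  rcases hqc.eq_or_lt with rfl | hqc
  · simp
  rcases hqj.eq_or_lt with rfl | hqj
  · simp
  have hpb : √pb = √qj * √pa / √qc := by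
    rw [show pb = qj * pa / qc by field_simp; linarith, Real.sqrt_div' _ hqc.le,
      Real.sqrt_mul hqj.le]
  have hsqj : √qj ≠ 0 := (Real.sqrt_pos.mpr hqj).ne'
  have hsqc : √qc ≠ 0 := (Real.sqrt_pos.mpr hqc).ne'
  rw [hpb, mul_inv_cancel₀ hqj.ne']
  field_simp
  rw [Real.sq_sqrt hpa, Real.sq_sqrt hqc.le, mul_comm]

section Modular

variable {ι κ : Type*} [Fintype ι] [DecidableEq ι] [Fintype κ] [DecidableEq κ]

theorem diagonal_mul_single (d : ι → ℂ) (c j : ι) (x : ℂ) :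
    diagonal d * single c j x = d c • single c j x := by
  ext a b
  by_cases ha : c = a <;> simp [ha, single_apply, diagonal_mul]

theorem single_mul_diagonal (d : ι → ℂ) (c j : ι) (x : ℂ) :
    single c j x * diagonal d = d j • single c j x := by
  ext a b
  by_cases hb : j = b <;> simp [hb, single_apply, mul_diagonal, mul_comm]

theorem diagonal_mul_map_eq_of_modular (T : Matrix ι ι ℂ →ₗ[ℂ] Matrix κ κ ℂ) {q : ι → ℝ}
    {p : κ → ℝ} (hq : ∀ i, 0 ≤ q i) (hp : ∀ a, 0 ≤ p a)
    (hT : ∀ B, T (diagonal (RCLike.ofReal ∘ q) * B) * diagonal (RCLike.ofReal ∘ p) =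
      diagonal (RCLike.ofReal ∘ p) * T (B * diagonal (RCLike.ofReal ∘ q)))
    (B : Matrix ι ι ℂ) :
    diagonal (RCLike.ofReal ∘ p) * T (diagonal (RCLike.ofReal ∘ (·⁻¹) ∘ q) * B *
        (diagonal (RCLike.ofReal ∘ q) * diagonal (RCLike.ofReal ∘ (·⁻¹) ∘ q))) =
      diagonal (RCLike.ofReal ∘ Real.sqrt ∘ p) *
        T (diagonal (RCLike.ofReal ∘ (fun x => (√x)⁻¹) ∘ q) * B *
          diagonal (RCLike.ofReal ∘ (fun x => (√x)⁻¹) ∘ q)) *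
        diagonal (RCLike.ofReal ∘ Real.sqrt ∘ p) := by
  induction B using Matrix.induction_on' with
  | h_zero => simp
  | h_add X Y hX hY => simp only [mul_add, add_mul, map_add, hX, hY]
  | h_std_basis c j x =>
    -- The hypothesis at `single c j x` kills the `(a, b)` entry of `T (single c j x)` unless
    -- `q c * p b = q j * p a`, and on such entries the two weights agree.
    have h := hT (single c j x)
    simp only [diagonal_mul_diagonal, diagonal_mul_single, single_mul_diagonal, Matrix.smul_mul,
      Matrix.mul_smul, map_smul] at h ⊢
    ext a b
    have hab := congrFun (congrFun h a) b
    simp only [Matrix.smul_apply, mul_diagonal, diagonal_mul, Function.comp_apply,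
      smul_eq_mul] at hab ⊢
    rcases eq_or_ne (T (single c j x) a b) 0 with ht | ht
    · simp [ht]
    have hqp : q c * p b = q j * p a := by
      refine Complex.ofReal_injective (mul_right_cancel₀ ht ?_)
      push_cast
      linear_combination hab
    have key := congrArg (fun r : ℝ => (r : ℂ) * T (single c j x) a b)
      (inv_mul_mul_eq_inv_sqrt_mul_of_mul_eq (hq c) (hq j) (hp a) hqp)
    push_cast at key ⊢
    linear_combination key

theorem mul_map_cfc_eq_of_modular (F : Matrix ι ι ℂ →ₗ[ℂ] Matrix κ κ ℂ) {σ : Matrix ι ι ℂ}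
    {ρ : Matrix κ κ ℂ} (hσ : σ.PosSemidef) (hρ : ρ.PosSemidef)
    (hmod : ∀ B, F (σ * B) * ρ = ρ * F (B * σ)) (B : Matrix ι ι ℂ) :
    ρ * F (cfc (·⁻¹ : ℝ → ℝ) σ * B * (σ * cfc (·⁻¹ : ℝ → ℝ) σ)) =
      cfc Real.sqrt ρ * F (cfc (fun x : ℝ => (√x)⁻¹) σ * B * cfc (fun x : ℝ => (√x)⁻¹) σ) *
        cfc Real.sqrt ρ := by
  set αU := Unitary.conjStarAlgAut ℂ _ hσ.1.eigenvectorUnitary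
  set αV := Unitary.conjStarAlgAut ℂ _ hρ.1.eigenvectorUnitary
  have hσU : αU (diagonal (RCLike.ofReal ∘ hσ.1.eigenvalues)) = σ := hσ.1.spectral_theorem.symm
  have hρV : αV (diagonal (RCLike.ofReal ∘ hρ.1.eigenvalues)) = ρ := hρ.1.spectral_theorem.symm
  have hcfcσ (f : ℝ → ℝ) : αU (diagonal (RCLike.ofReal ∘ f ∘ hσ.1.eigenvalues)) = cfc f σ :=
    (hσ.1.cfc_eq f).symm
  have hcfcρ (f : ℝ → ℝ) : αV (diagonal (RCLike.ofReal ∘ f ∘ hρ.1.eigenvalues)) = cfc f ρ :=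
    (hρ.1.cfc_eq f).symm
  let T := αV.symm.toAlgEquiv.toLinearMap ∘ₗ F ∘ₗ αU.toAlgEquiv.toLinearMap
  have hTF (X : Matrix ι ι ℂ) : αV (T X) = F (αU X) := by simp [T]
  have hT (B : Matrix ι ι ℂ) : T (diagonal (RCLike.ofReal ∘ hσ.1.eigenvalues) * B) *
      diagonal (RCLike.ofReal ∘ hρ.1.eigenvalues) =
      diagonal (RCLike.ofReal ∘ hρ.1.eigenvalues) *
        T (B * diagonal (RCLike.ofReal ∘ hσ.1.eigenvalues)) := by
    apply EquivLike.injective αV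
    simp only [map_mul, hTF, hσU, hρV]
    exact hmod _
  simpa only [map_mul, hTF, hσU, hρV, hcfcσ, hcfcρ, StarAlgEquiv.apply_symm_apply] using
    congrArg αV (diagonal_mul_map_eq_of_modular T hσ.eigenvalues_nonneg hρ.eigenvalues_nonneg hT
      (αU.symm B))

end Modular

section Bayes

variable {ι κ : Type*} [Fintype ι] [Fintype κ]
  {F : Matrix ι ι ℂ → Matrix κ κ ℂ} {Fd Gleft Gright : Matrix κ κ ℂ → Matrix ι ι ℂ}
  {ρ : Matrix κ κ ℂ} {σ Q : Matrix ι ι ℂ}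

theorem map_conjTranspose_of_trace_dual (hF : ∀ B, F Bᴴ = (F B)ᴴ)
    (hdual : ∀ A B, (F B * A).trace = (B * Fd A).trace) (A : Matrix κ κ ℂ) :
    Fd Aᴴ = (Fd A)ᴴ := by
  refine ext_iff_trace_mul_left.mpr fun B => ?_
  calc (B * Fd Aᴴ).trace = star (A * (F B)ᴴ).trace := by
        rw [← hdual, ← trace_conjTranspose, conjTranspose_mul, conjTranspose_conjTranspose]
    _ = star (Fd A * Bᴴ).trace := by rw [trace_mul_comm, ← hF, hdual, trace_mul_comm]
    _ = (B * (Fd A)ᴴ).trace := by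
        rw [← trace_conjTranspose, conjTranspose_mul, conjTranspose_conjTranspose]

theorem bayes_left_eq_adjoint (hdual : ∀ A B, (F B * A).trace = (B * Fd A).trace)
    (hGleft : ∀ A B, (ρ * A * F B).trace = (σ * Gleft A * B).trace) (A : Matrix κ κ ℂ) :
    σ * Gleft A = Fd (ρ * A) := by
  refine ext_iff_trace_mul_right.mpr fun B => ?_
  rw [← hGleft, trace_mul_comm (Fd _), ← hdual, trace_mul_comm]

theorem bayes_right_eq_adjoint (hdual : ∀ A B, (F B * A).trace = (B * Fd A).trace)
    (hGright : ∀ A B, (ρ * F B * A).trace = (σ * B * Gright A).trace) (A : Matrix κ κ ℂ) :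
    Gright A * σ = Fd (A * ρ) := by
  refine ext_iff_trace_mul_right.mpr fun B => ?_
  rw [mul_assoc, trace_mul_comm, ← hGright, trace_mul_comm (Fd _), ← hdual, trace_mul_comm,
    ← mul_assoc, trace_mul_cycle, mul_assoc]

theorem conjTranspose_support_bayes_left [DecidableEq ι] (hQ : IsSupportProj Q σ)
    (hσ : σ.IsHermitian) (hρ : ρ.IsHermitian) (hFd : ∀ A, Fd Aᴴ = (Fd A)ᴴ)
    (hleft : ∀ A, σ * Gleft A = Fd (ρ * A)) (hright : ∀ A, Gright A * σ = Fd (A * ρ))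
    (A : Matrix κ κ ℂ) : (Q * Gleft A * Q)ᴴ = Q * Gright Aᴴ * Q := by
  have hmulσ : (Gleft A)ᴴ * σ = Gright Aᴴ * σ := by
    rw [← hσ.eq, ← conjTranspose_mul, hσ.eq, hleft, ← hFd, conjTranspose_mul, hρ.eq, hright]
  have hmulQ : (Gleft A)ᴴ * Q = Gright Aᴴ * Q := by
    rw [← hQ.mul_cfc_inv_eq hσ, ← mul_assoc, hmulσ, mul_assoc]
  rw [conjTranspose_mul, conjTranspose_mul, hQ.1.eq, hmulQ, mul_assoc]

theorem support_bayes_right_star_iff [DecidableEq ι] (hQ : IsSupportProj Q σ)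
    (hσ : σ.IsHermitian) (hρ : ρ.IsHermitian) (hFd : ∀ A, Fd Aᴴ = (Fd A)ᴴ)
    (hleft : ∀ A, σ * Gleft A = Fd (ρ * A)) (hright : ∀ A, Gright A * σ = Fd (A * ρ)) :
    (∀ A, (Q * Gright A * Q)ᴴ = Q * Gright Aᴴ * Q) ↔ ∀ A, Q * Gleft A * Q = Q * Gright A * Q := by
  have h := conjTranspose_support_bayes_left hQ hσ hρ hFd hleft hright
  refine ⟨fun hstar A => ?_, fun hLR A => by rw [← hLR, h]⟩
  rw [← conjTranspose_conjTranspose (Q * Gleft A * Q), h, hstar, conjTranspose_conjTranspose]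

theorem adjoint_sandwich_iff (hleft : ∀ A, σ * Gleft A = Fd (ρ * A))
    (hright : ∀ A, Gright A * σ = Fd (A * ρ)) (hQσ : Q * σ = σ) (hσQ : σ * Q = σ)
    (A : Matrix κ κ ℂ) :
    Q * Fd (ρ * A) * σ = σ * Fd (A * ρ) * Q ↔ σ * Gleft A * σ = σ * Gright A * σ := by
  rw [← hleft, ← hright, ← mul_assoc Q, hQσ]
  simp only [mul_assoc, hσQ]

theorem trace_map_mul_mul_eq (hGleft : ∀ A B, (ρ * A * F B).trace = (σ * Gleft A * B).trace)
    (A : Matrix κ κ ℂ) (X : Matrix ι ι ℂ) :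
    (F (σ * X) * ρ * A).trace = (σ * Gleft A * σ * X).trace := by
  rw [mul_assoc, trace_mul_comm, hGleft]
  simp only [mul_assoc]

theorem trace_mul_map_mul_eq (hGright : ∀ A B, (ρ * F B * A).trace = (σ * B * Gright A).trace)
    (A : Matrix κ κ ℂ) (X : Matrix ι ι ℂ) :
    (ρ * F (X * σ) * A).trace = (σ * Gright A * σ * X).trace := by
  calc (ρ * F (X * σ) * A).trace = ((σ * X) * (σ * Gright A)).trace := by
        rw [hGright]; simp only [mul_assoc]
    _ = (σ * Gright A * σ * X).trace := by rw [trace_mul_comm]; simp only [mul_assoc]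

theorem modular_iff_sandwich_bayes_eq
    (hGleft : ∀ A B, (ρ * A * F B).trace = (σ * Gleft A * B).trace)
    (hGright : ∀ A B, (ρ * F B * A).trace = (σ * B * Gright A).trace) :
    (∀ B, F (σ * B) * ρ = ρ * F (B * σ)) ↔ ∀ A, σ * Gleft A * σ = σ * Gright A * σ := by
  simp only [ext_iff_trace_mul_right (A := F (σ * _) * ρ),
    ext_iff_trace_mul_right (A := σ * Gleft _ * σ), trace_map_mul_mul_eq hGleft,
    trace_mul_map_mul_eq hGright]
  exact forall_comm

omit [Fintype κ] in
theorem trace_sandwich_mul_support (hQσ : Q * σ = σ) (hσQ : σ * Q = σ) (X B : Matrix ι ι ℂ) :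
    (σ * X * σ * (Q * B * Q)).trace = (σ * X * σ * B).trace := by
  calc _ = (Q * (σ * X * σ * (Q * B))).trace := by rw [trace_mul_comm Q]; simp only [mul_assoc]
    _ = _ := by simp only [← mul_assoc]; rw [hQσ, mul_assoc (σ * X) σ Q, hσQ]

theorem map_mul_support_iff (hGleft : ∀ A B, (ρ * A * F B).trace = (σ * Gleft A * B).trace)
    (hGright : ∀ A B, (ρ * F B * A).trace = (σ * B * Gright A).trace)
    (hQσ : Q * σ = σ) (hσQ : σ * Q = σ) (B : Matrix ι ι ℂ) :
    F (σ * (Q * B * Q)) * ρ = ρ * F (Q * B * Q * σ) ↔ F (σ * B) * ρ = ρ * F (B * σ) := by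
  have hleft : F (σ * (Q * B * Q)) * ρ = F (σ * B) * ρ := by
    refine ext_iff_trace_mul_right.mpr fun A => ?_
    rw [trace_map_mul_mul_eq hGleft, trace_map_mul_mul_eq hGleft]
    exact trace_sandwich_mul_support hQσ hσQ _ _
  have hright : ρ * F (Q * B * Q * σ) = ρ * F (B * σ) := by
    refine ext_iff_trace_mul_right.mpr fun A => ?_
    rw [trace_mul_map_mul_eq hGright, trace_mul_map_mul_eq hGright]
    exact trace_sandwich_mul_support hQσ hσQ _ _
  rw [hleft, hright]

theorem support_bayes_right_eq_conj_adjoint (hdual : ∀ A B, (F B * A).trace = (B * Fd A).trace)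
    (hGright : ∀ A B, (ρ * F B * A).trace = (σ * B * Gright A).trace)
    {τ s : Matrix ι ι ℂ} {r : Matrix κ κ ℂ} (hτ : σ * τ = Q)
    (hsr : ∀ B, ρ * F (τ * B * Q) = r * F (s * B * s) * r) (A : Matrix κ κ ℂ) :
    Q * Gright A * Q = s * Fd (r * A * r) * s := by
  refine ext_iff_trace_mul_right.mpr fun B => ?_
  calc (Q * Gright A * Q * B).trace = ((Q * Gright A) * (Q * B)).trace := by
        simp only [mul_assoc]
    _ = ((Q * B) * (Q * Gright A)).trace := trace_mul_comm _ _
    _ = (σ * (τ * B * Q) * Gright A).trace := by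
        nth_rw 1 [← hτ]; simp only [mul_assoc]
    _ = (r * F (s * B * s) * r * A).trace := by rw [← hGright, hsr]
    _ = (F (s * B * s) * (r * A * r)).trace := by
        rw [mul_assoc, mul_assoc, trace_mul_comm]; simp only [mul_assoc]
    _ = ((s * B) * (s * Fd (r * A * r))).trace := by rw [hdual]; simp only [mul_assoc]
    _ = (s * Fd (r * A * r) * s * B).trace := by rw [trace_mul_comm]; simp only [mul_assoc]

end Bayes

theorem isCP_support_bayes_right_of_modular {ι κ : Type*} [Fintype ι] [DecidableEq ι]
    [Fintype κ] [DecidableEq κ] {F : Matrix ι ι ℂ →ₗ[ℂ] Matrix κ κ ℂ}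
    {Fd Gright : Matrix κ κ ℂ → Matrix ι ι ℂ} {ρ : Matrix κ κ ℂ} {σ Q : Matrix ι ι ℂ}
    (hσ : σ.PosSemidef) (hρ : ρ.PosSemidef) (hQ : IsSupportProj Q σ) (hFcp : IsCP F)
    (hFd : ∀ A, Fd Aᴴ = (Fd A)ᴴ) (hdual : ∀ A B, (F B * A).trace = (B * Fd A).trace)
    (hGright : ∀ A B, (ρ * F B * A).trace = (σ * B * Gright A).trace)
    (hmod : ∀ B, F (σ * B) * ρ = ρ * F (B * σ)) : IsCP fun A => Q * Gright A * Q := by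
  have hs : (cfc (fun x : ℝ => (√x)⁻¹) σ)ᴴ = cfc (fun x : ℝ => (√x)⁻¹) σ := IsSelfAdjoint.cfc
  have hr : (cfc Real.sqrt ρ)ᴴ = cfc Real.sqrt ρ := IsSelfAdjoint.cfc
  have h := (IsCP.of_trace_dual hFcp hFd hdual).conjTranspose_mul_map_mul
    (cfc (fun x : ℝ => (√x)⁻¹) σ) (cfc Real.sqrt ρ)
  rw [hs, hr] at h
  have hsr := mul_map_cfc_eq_of_modular F hσ hρ hmod
  rw [hQ.mul_cfc_inv_eq hσ.1] at hsr
  simpa only [support_bayes_right_eq_conj_adjoint hdual hGright (hQ.mul_cfc_inv_eq hσ.1) hsr]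
    using h

theorem stmt_15_general (n m : ℕ)
    (F : Matrix (Fin n) (Fin n) ℂ →ₗ[ℂ] Matrix (Fin m) (Fin m) ℂ)
    (hFcp : IsCP (⇑F))
    (ρ : Matrix (Fin m) (Fin m) ℂ) (hρ : ρ.PosSemidef)
    (σ : Matrix (Fin n) (Fin n) ℂ) (hσps : σ.PosSemidef)
    (Q : Matrix (Fin n) (Fin n) ℂ) (hQ : IsSupportProj Q σ)
    (Fd : Matrix (Fin m) (Fin m) ℂ →ₗ[ℂ] Matrix (Fin n) (Fin n) ℂ)
    (hFd : ∀ (A : Matrix (Fin m) (Fin m) ℂ) (B : Matrix (Fin n) (Fin n) ℂ),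
      ((F B)ᴴ * A).trace = (Bᴴ * Fd A).trace)
    (Gleft : Matrix (Fin m) (Fin m) ℂ →ₗ[ℂ] Matrix (Fin n) (Fin n) ℂ)
    (hGL : ∀ (A : Matrix (Fin m) (Fin m) ℂ) (B : Matrix (Fin n) (Fin n) ℂ),
      (ρ * A * F B).trace = (σ * Gleft A * B).trace)
    (Gright : Matrix (Fin m) (Fin m) ℂ →ₗ[ℂ] Matrix (Fin n) (Fin n) ℂ)
    (hGR : ∀ (A : Matrix (Fin m) (Fin m) ℂ) (B : Matrix (Fin n) (Fin n) ℂ),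
      (ρ * F B * A).trace = (σ * B * Gright A).trace) :
    ((∀ A : Matrix (Fin m) (Fin m) ℂ, (Q * Gright A * Q)ᴴ = Q * Gright (Aᴴ) * Q) ↔
     (∀ A : Matrix (Fin m) (Fin m) ℂ, Q * Gleft A * Q = Q * Gright A * Q)) ∧
    ((∀ A : Matrix (Fin m) (Fin m) ℂ, Q * Gleft A * Q = Q * Gright A * Q) ↔
     (∀ A : Matrix (Fin m) (Fin m) ℂ, Q * Fd (ρ * A) * σ = σ * Fd (A * ρ) * Q)) ∧
    ((∀ A : Matrix (Fin m) (Fin m) ℂ, Q * Fd (ρ * A) * σ = σ * Fd (A * ρ) * Q) ↔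
     (∀ B : Matrix (Fin n) (Fin n) ℂ,
        F (σ * (Q * B * Q)) * ρ = ρ * F ((Q * B * Q) * σ))) ∧
    ((∀ B : Matrix (Fin n) (Fin n) ℂ,
        F (σ * (Q * B * Q)) * ρ = ρ * F ((Q * B * Q) * σ)) ↔
     IsCP (fun A => Q * Gright A * Q)) := by
  have hdual : ∀ A B, (F B * A).trace = (B * Fd A).trace := fun A B => by
    simpa [hFcp.map_conjTranspose] using hFd A Bᴴ
  have hFdstar := map_conjTranspose_of_trace_dual hFcp.map_conjTranspose hdual
  have hleft := bayes_left_eq_adjoint hdual hGL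
  have hright := bayes_right_eq_adjoint hdual hGR
  have hQσ := hQ.mul_self_eq
  have hσQ := hQ.self_mul_eq hσps.1
  have i_ii := support_bayes_right_star_iff hQ hσps.1 hρ.1 hFdstar hleft hright
  have ii_sandwich : (∀ A, Q * Gleft A * Q = Q * Gright A * Q) ↔
      ∀ A, σ * Gleft A * σ = σ * Gright A * σ :=
    forall_congr' fun A => (hQ.mul_mul_eq_iff hσps.1 _ _).symm
  have iii_sandwich := forall_congr' (adjoint_sandwich_iff hleft hright hQσ hσQ)
  have iv_modular := forall_congr' (map_mul_support_iff hGL hGR hQσ hσQ)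
  have modular_sandwich := modular_iff_sandwich_bayes_eq hGL hGR
  have v_i (hcp : IsCP fun A => Q * Gright A * Q) (A : Matrix (Fin m) (Fin m) ℂ) :
      (Q * Gright A * Q)ᴴ = Q * Gright Aᴴ * Q := by
    have hcp' : IsCP ⇑(LinearMap.mulRight ℂ Q ∘ₗ LinearMap.mulLeft ℂ Q ∘ₗ Gright) := hcp
    exact (hcp'.map_conjTranspose A).symm
  exact ⟨i_ii, ii_sandwich.trans iii_sandwich.symm,
    iii_sandwich.trans (modular_sandwich.symm.trans iv_modular.symm),
    fun hiv => isCP_support_bayes_right_of_modular hσps hρ hQ hFcp hFdstar hdual hGR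
      (iv_modular.mp hiv),
    fun hcp => iv_modular.mpr (modular_sandwich.mpr (ii_sandwich.mp (i_ii.mp (v_i hcp))))⟩

/-- non-commutative Bayes' theorem on matrix algebras: for a UCP map
`F : M_n(ℂ) → M_m(ℂ)`, a density matrix `ρ` with `σ` the density matrix of `ω∘F`, `Q`
the support projection of `σ`, `F†` the Hilbert–Schmidt adjoint of `F`, and `G^L`, `G^R`
unital left/right Bayes maps, the following are equivalent: (i) `A ↦ Q·G^R(A)·Q` is
star-preserving; (ii) `Q·G^L(·)·Q = Q·G^R(·)·Q`; (iii) `Q·F†(ρA)·σ = σ·F†(Aρ)·Q`;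
(iv) `F(σ·QBQ)·ρ = ρ·F(QBQ·σ)`; (v) `A ↦ Q·G^R(A)·Q` is completely positive. -/
theorem stmt_15 (n m : ℕ)
    (F : Matrix (Fin n) (Fin n) ℂ →ₗ[ℂ] Matrix (Fin m) (Fin m) ℂ)
    (hFcp : IsCP (⇑F)) (hFunital : F 1 = 1)
    (ρ : Matrix (Fin m) (Fin m) ℂ) (hρ : ρ.PosSemidef) (hρtr : ρ.trace = 1)
    (σ : Matrix (Fin n) (Fin n) ℂ) (hσps : σ.PosSemidef) (hσtr : σ.trace = 1)
    (hσ : ∀ B : Matrix (Fin n) (Fin n) ℂ, (σ * B).trace = (ρ * F B).trace)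
    (Q : Matrix (Fin n) (Fin n) ℂ) (hQ : IsSupportProj Q σ)
    (Fd : Matrix (Fin m) (Fin m) ℂ →ₗ[ℂ] Matrix (Fin n) (Fin n) ℂ)
    (hFd : ∀ (A : Matrix (Fin m) (Fin m) ℂ) (B : Matrix (Fin n) (Fin n) ℂ),
      ((F B)ᴴ * A).trace = (Bᴴ * Fd A).trace)
    (Gleft : Matrix (Fin m) (Fin m) ℂ →ₗ[ℂ] Matrix (Fin n) (Fin n) ℂ) (hGLu : Gleft 1 = 1)
    (hGL : ∀ (A : Matrix (Fin m) (Fin m) ℂ) (B : Matrix (Fin n) (Fin n) ℂ),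
      (ρ * A * F B).trace = (σ * Gleft A * B).trace)
    (Gright : Matrix (Fin m) (Fin m) ℂ →ₗ[ℂ] Matrix (Fin n) (Fin n) ℂ) (hGRu : Gright 1 = 1)
    (hGR : ∀ (A : Matrix (Fin m) (Fin m) ℂ) (B : Matrix (Fin n) (Fin n) ℂ),
      (ρ * F B * A).trace = (σ * B * Gright A).trace) :
    ((∀ A : Matrix (Fin m) (Fin m) ℂ, (Q * Gright A * Q)ᴴ = Q * Gright (Aᴴ) * Q) ↔
     (∀ A : Matrix (Fin m) (Fin m) ℂ, Q * Gleft A * Q = Q * Gright A * Q)) ∧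
    ((∀ A : Matrix (Fin m) (Fin m) ℂ, Q * Gleft A * Q = Q * Gright A * Q) ↔
     (∀ A : Matrix (Fin m) (Fin m) ℂ, Q * Fd (ρ * A) * σ = σ * Fd (A * ρ) * Q)) ∧
    ((∀ A : Matrix (Fin m) (Fin m) ℂ, Q * Fd (ρ * A) * σ = σ * Fd (A * ρ) * Q) ↔
     (∀ B : Matrix (Fin n) (Fin n) ℂ,
        F (σ * (Q * B * Q)) * ρ = ρ * F ((Q * B * Q) * σ))) ∧
    ((∀ B : Matrix (Fin n) (Fin n) ℂ,
        F (σ * (Q * B * Q)) * ρ = ρ * F ((Q * B * Q) * σ)) ↔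
     IsCP (fun A => Q * Gright A * Q)) :=
  stmt_15_general n m F hFcp ρ hρ σ hσps Q hQ Fd hFd Gleft hGL Gright hGR
end

section
/- Let F : M_n(ℂ) → M_m(ℂ) be a UCP map, ρ ∈ M_m(ℂ) a density matrix with ω = tr(ρ·), σ ∈ M_n(ℂ) the density matrix of ξ := ω∘F, Q the support projection of σ, F† the Hilbert–Schmidt adjoint of F, and G^R : M_m(ℂ) → M_n(ℂ) a unital linear map with tr(ρ·F(B)·A) = tr(σ·B·G^R(A)) for all A, B. If the equivalent conditions hold (e.g., F(σ·QBQ)·ρ = ρ·F(QBQ·σ) for all B ∈ M_n(ℂ)), then for all A ∈ M_m(ℂ): Q·G^R(A)·Q = g(σ)·F†(√ρ·A·√ρ)·g(σ), where √ρ is the positive semidefinite square root of ρ and g(σ) is obtained by applying to σ, via the functional calculus for Hermitian matrices, the function g with g(x) = x^{-1/2} for x > 0 and g(0) = 0 (i.e., g(σ) is the square root of the Moore–Penrose pseudoinverse of σ). -/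
/-!
Both sides of the identity are unchanged by right multiplication with `Q`, and `σ` is
invertible on the range of `Q`, so it suffices to compare `tr (σ B X)` for all `B`. For the
left side this is `tr (ρ F(QBQ) A)`, by the defining property of `G^R`. A positive map
commutes with `ᴴ`, so `F†` is the trace adjoint of `F`, and for the right side one gets
`tr (√ρ F(√σ B g(σ)) √ρ A)`.

It remains to show `ρ F(QBQ) = √ρ F(√σ B g(σ)) √ρ`. Both sides are linear in `B`, so we
may take `B = u_a u_bᴴ` for eigenvectors of `σ` with eigenvalues `μ_a, μ_b > 0`. Then the
hypothesis on `F` says `ρ Y = (μ_a / μ_b) Y ρ` for `Y = F B`, and such a twisted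
commutation relation with a positive `ρ` passes to square roots:
`ρ Y = √(μ_a / μ_b) √ρ Y √ρ`.
-/

open Matrix ComplexOrder

/-- The positive semidefinite square root of a positive semidefinite matrix
(the definition `Matrix.PosSemidef.sqrt` of the older Mathlib, since removed). -/
noncomputable def Matrix.PosSemidef.sqrt {n : Type*} [Fintype n] [DecidableEq n] {𝕜 : Type*}
    [RCLike 𝕜] {A : Matrix n n 𝕜} (hA : A.PosSemidef) : Matrix n n 𝕜 :=
  (hA.1.eigenvectorUnitary : Matrix n n 𝕜) *
    diagonal (fun i => ((Real.sqrt (hA.1.eigenvalues i) : ℝ) : 𝕜)) *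
  (star hA.1.eigenvectorUnitary : Matrix n n 𝕜)

/-- The function `g` of the statement: `cfc pinvSqrt σ` is the square root of the
Moore–Penrose pseudoinverse of `σ`. -/
noncomputable def pinvSqrt (x : ℝ) : ℝ := if 0 < x then x ^ (-(1 : ℝ) / 2) else 0

theorem pinvSqrt_zero : pinvSqrt 0 = 0 := by simp [pinvSqrt]

theorem pinvSqrt_mul_self {x : ℝ} (hx : 0 ≤ x) : pinvSqrt x * x = √x := by
  rcases hx.lt_or_eq with hx | rfl
  · rw [pinvSqrt, if_pos hx, Real.sqrt_eq_rpow, ← Real.rpow_add_one hx.ne']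
    norm_num
  · simp [pinvSqrt]

theorem sqrt_mul_pinvSqrt (x : ℝ) {y : ℝ} (hy : 0 < y) : √x * pinvSqrt y = √(x / y) := by
  have hy' : y ^ (-(1 : ℝ) / 2) = (√y)⁻¹ := by
    rw [Real.sqrt_eq_rpow, ← Real.rpow_neg hy.le]
    norm_num
  rw [pinvSqrt, if_pos hy, hy', Real.sqrt_div' x hy.le, div_eq_mul_inv]

theorem RCLike.ofReal_mul_eq_sqrt_mul_of_ofReal_mul_eq {𝕜 : Type*} [RCLike 𝕜] {x y t : ℝ}
    (hy : 0 ≤ y) (ht : 0 ≤ t) {z : 𝕜} (h : (x : 𝕜) * z = t * (z * y)) :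
    (x : 𝕜) * z = √t * (√x * z * √y) := by
  rcases eq_or_ne z 0 with rfl | hz
  · simp
  have hxy : x = t * y := by
    have h' : (x : 𝕜) * z = ((t * y : ℝ) : 𝕜) * z := h.trans (by push_cast; ring)
    exact_mod_cast mul_right_cancel₀ hz h'
  have hsqrt : √t * (√x * √y) = x := by
    calc √t * (√x * √y) = (√t * √t) * (√y * √y) := by rw [hxy, Real.sqrt_mul ht]; ring
      _ = x := by rw [Real.mul_self_sqrt ht, Real.mul_self_sqrt hy, hxy]
  calc (x : 𝕜) * z = ((√t * (√x * √y) : ℝ) : 𝕜) * z := by rw [hsqrt]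
    _ = √t * (√x * z * √y) := by push_cast; ring

theorem IsCP.posSemidef_apply {n m : Type*} [Fintype n] [Fintype m]
    {Φ : Matrix n n ℂ → Matrix m m ℂ} (hΦ : IsCP Φ) {X : Matrix n n ℂ}
    (hX : X.PosSemidef) : (Φ X).PosSemidef :=
  (hΦ 1 _ (hX.submatrix (Prod.snd : Fin 1 × n → n))).submatrix fun i => ((0 : Fin 1), i)

open scoped MatrixOrder in
theorem map_conjTranspose_of_posSemidef {n m : Type*} [Fintype n] [DecidableEq n]
    {Φ : Matrix n n ℂ →ₗ[ℂ] Matrix m m ℂ}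
    (hΦ : ∀ X : Matrix n n ℂ, X.PosSemidef → (Φ X).PosSemidef) (C : Matrix n n ℂ) :
    Φ Cᴴ = (Φ C)ᴴ := by
  have map_selfAdjoint (H : selfAdjoint (Matrix n n ℂ)) : star (Φ H) = Φ H := by
    rw [← CFC.posPart_sub_negPart (H : Matrix n n ℂ) H.2, map_sub]
    exact ((hΦ _ (nonneg_iff_posSemidef.mp (CFC.posPart_nonneg _))).isHermitian.sub
      (hΦ _ (nonneg_iff_posSemidef.mp (CFC.negPart_nonneg _))).isHermitian).eq
  rw [← star_eq_conjTranspose, ← star_eq_conjTranspose, ← realPart_add_I_smul_imaginaryPart C,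
    star_add, star_smul, (realPart C).2.star_eq, (imaginaryPart C).2.star_eq, map_add, map_add,
    map_smul, map_smul, star_add, star_smul, map_selfAdjoint, map_selfAdjoint]

namespace Matrix

variable {n : Type*} [Fintype n] [DecidableEq n]

theorem diagonal_mul_single {α : Type*} [NonUnitalNonAssocSemiring α] (d : n → α) (a b : n)
    (c : α) : diagonal d * single a b c = single a b (d a * c) := by
  ext i j
  by_cases hi : a = i <;> simp [diagonal_mul, single_apply, hi]

theorem single_mul_diagonal {α : Type*} [NonUnitalNonAssocSemiring α] (d : n → α) (a b : n)
    (c : α) : single a b c * diagonal d = single a b (c * d b) := by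
  ext i j
  by_cases hj : b = j <;> simp [mul_diagonal, single_apply, hj]

theorem IsHermitian.eq_of_range_mulVecLin_eq {R : Type*} [CommRing R] [StarRing R]
    {P₁ P₂ : Matrix n n R} (h₁ : P₁.IsHermitian) (h₂ : P₂.IsHermitian)
    (hP₁ : IsIdempotentElem P₁) (hP₂ : IsIdempotentElem P₂)
    (hr : LinearMap.range P₁.mulVecLin = LinearMap.range P₂.mulVecLin) : P₁ = P₂ := by
  have mul_eq_right : ∀ {P P' : Matrix n n R}, IsIdempotentElem P →
      LinearMap.range P'.mulVecLin ≤ LinearMap.range P.mulVecLin → P * P' = P' := by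
    intro P P' hP hle
    refine Matrix.toLin'.injective (LinearMap.ext fun v => ?_)
    obtain ⟨w, hw⟩ := hle ⟨v, rfl⟩
    simp only [mulVecLin_apply] at hw
    rw [toLin'_apply, toLin'_apply, ← mulVec_mulVec, ← hw, mulVec_mulVec, hP.eq]
  calc P₁ = (P₂ * P₁)ᴴ := by rw [mul_eq_right hP₂ hr.le, h₁.eq]
    _ = P₁ * P₂ := by rw [conjTranspose_mul, h₁.eq, h₂.eq]
    _ = P₂ := mul_eq_right hP₁ hr.ge

namespace IsHermitian

variable {𝕜 : Type*} [RCLike 𝕜] {A : Matrix n n 𝕜} (hA : A.IsHermitian)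

/-- The matrix unit `u_a u_bᴴ` built from the eigenvectors `u_a, u_b` of `A`. -/
noncomputable def eigenUnit (a b : n) : Matrix n n 𝕜 :=
  Unitary.conjStarAlgAut 𝕜 _ hA.eigenvectorUnitary (single a b 1)

theorem linearMap_ext_eigenUnit {M : Type*} [AddCommMonoid M] [Module 𝕜 M]
    {φ ψ : Matrix n n 𝕜 →ₗ[𝕜] M}
    (h : ∀ a b, φ (hA.eigenUnit a b) = ψ (hA.eigenUnit a b)) : φ = ψ :=
  ((stdBasis 𝕜 n n).map
      (Unitary.conjStarAlgAut 𝕜 _ hA.eigenvectorUnitary).toAlgEquiv.toLinearEquiv).ext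
    fun ⟨a, b⟩ => by simpa [stdBasis_eq_single, eigenUnit] using h a b

theorem cfc_id_eq : hA.cfc id = A := hA.spectral_theorem.symm

theorem isHermitian_cfc (f : ℝ → ℝ) : (hA.cfc f).IsHermitian := by
  rw [← hA.cfc_eq]
  exact cfc_predicate f A

theorem cfc_mul_cfc (f g : ℝ → ℝ) : hA.cfc f * hA.cfc g = hA.cfc fun x => f x * g x := by
  rw [IsHermitian.cfc, IsHermitian.cfc, IsHermitian.cfc, ← map_mul, diagonal_mul_diagonal]
  simp [Function.comp_def]

theorem cfc_congr {f g : ℝ → ℝ} (h : ∀ i, f (hA.eigenvalues i) = g (hA.eigenvalues i)) :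
    hA.cfc f = hA.cfc g := by
  simp only [IsHermitian.cfc, Function.comp_def, h]

theorem cfc_mul_eigenUnit (f : ℝ → ℝ) (a b : n) :
    hA.cfc f * hA.eigenUnit a b = (f (hA.eigenvalues a) : 𝕜) • hA.eigenUnit a b := by
  rw [IsHermitian.cfc, eigenUnit, ← map_mul, diagonal_mul_single, ← map_smul, smul_single]
  simp

theorem eigenUnit_mul_cfc (f : ℝ → ℝ) (a b : n) :
    hA.eigenUnit a b * hA.cfc f = (f (hA.eigenvalues b) : 𝕜) • hA.eigenUnit a b := by
  rw [IsHermitian.cfc, eigenUnit, ← map_mul, single_mul_diagonal, ← map_smul, smul_single]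
  simp

theorem cfc_mul_eigenUnit_mul_cfc (f g : ℝ → ℝ) (a b : n) :
    hA.cfc f * hA.eigenUnit a b * hA.cfc g =
      (f (hA.eigenvalues a) * g (hA.eigenvalues b) : 𝕜) • hA.eigenUnit a b := by
  rw [cfc_mul_eigenUnit, smul_mul_assoc, eigenUnit_mul_cfc, smul_smul]

theorem mul_eigenUnit (a b : n) :
    A * hA.eigenUnit a b = (hA.eigenvalues a : 𝕜) • hA.eigenUnit a b := by
  simpa only [cfc_id_eq, id_eq] using hA.cfc_mul_eigenUnit id a b

theorem eigenUnit_mul (a b : n) :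
    hA.eigenUnit a b * A = (hA.eigenvalues b : 𝕜) • hA.eigenUnit a b := by
  simpa only [cfc_id_eq, id_eq] using hA.eigenUnit_mul_cfc id a b

end IsHermitian

namespace PosSemidef

variable {𝕜 : Type*} [RCLike 𝕜]

theorem mul_eq_sqrt_smul_sqrt_mul_mul_sqrt {ρ : Matrix n n 𝕜} (hρ : ρ.PosSemidef)
    {Y : Matrix n n 𝕜} {t : ℝ} (ht : 0 ≤ t) (h : ρ * Y = (t : 𝕜) • (Y * ρ)) :
    ρ * Y = (√t : 𝕜) • (hρ.sqrt * Y * hρ.sqrt) := by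
  set c := Unitary.conjStarAlgAut 𝕜 _ hρ.1.eigenvectorUnitary
  set D : Matrix n n 𝕜 := diagonal (RCLike.ofReal ∘ hρ.1.eigenvalues)
  set S : Matrix n n 𝕜 := diagonal fun i => (√(hρ.1.eigenvalues i) : 𝕜)
  set Z := c.symm Y
  have hY : Y = c Z := (c.apply_symm_apply Y).symm
  have hρc : ρ = c D := hρ.1.spectral_theorem
  have hsqrt : hρ.sqrt = c S := rfl
  have hZ : D * Z = (t : 𝕜) • (Z * D) := by
    apply EquivLike.injective c
    rw [map_mul, map_smul, map_mul, ← hρc, ← hY]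
    exact h
  have hZ' : D * Z = (√t : 𝕜) • (S * Z * S) := by
    ext i j
    have hij := congrFun₂ hZ i j
    simp only [D, S, diagonal_mul, mul_diagonal, smul_apply, smul_eq_mul,
      Function.comp_apply] at hij ⊢
    exact RCLike.ofReal_mul_eq_sqrt_mul_of_ofReal_mul_eq (hρ.eigenvalues_nonneg j) ht hij
  rw [hY, hsqrt, ← map_mul, ← map_mul, ← map_smul, ← hZ', map_mul, ← hρc]

variable {σ : Matrix n n 𝕜} (hσ : σ.PosSemidef)

theorem cfc_mul_cfc_eq {f g h : ℝ → ℝ} (hfg : ∀ x, 0 ≤ x → f x * g x = h x) :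
    hσ.1.cfc f * hσ.1.cfc g = hσ.1.cfc h := by
  rw [hσ.1.cfc_mul_cfc]
  exact hσ.1.cfc_congr fun i => hfg _ (hσ.eigenvalues_nonneg i)

theorem mul_cfc_eq {f g : ℝ → ℝ} (hfg : ∀ x, 0 ≤ x → x * f x = g x) :
    σ * hσ.1.cfc f = hσ.1.cfc g := by
  simpa only [hσ.1.cfc_id_eq] using hσ.cfc_mul_cfc_eq (f := id) hfg

theorem cfc_mul_eq {f g : ℝ → ℝ} (hfg : ∀ x, 0 ≤ x → f x * x = g x) :
    hσ.1.cfc f * σ = hσ.1.cfc g := by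
  simpa only [hσ.1.cfc_id_eq] using hσ.cfc_mul_cfc_eq (g := id) hfg

noncomputable def supportProj : Matrix n n 𝕜 :=
  hσ.1.cfc fun x => if 0 < x then 1 else 0

theorem supportProj_mul_self : hσ.supportProj * σ = σ := by
  refine (hσ.cfc_mul_eq fun x hx => ?_).trans hσ.1.cfc_id_eq
  rcases hx.lt_or_eq with hx | rfl <;> simp [*]

theorem mul_supportProj : σ * hσ.supportProj = σ := by
  refine (hσ.mul_cfc_eq fun x hx => ?_).trans hσ.1.cfc_id_eq
  rcases hx.lt_or_eq with hx | rfl <;> simp [*]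

theorem isIdempotentElem_supportProj : IsIdempotentElem hσ.supportProj :=
  hσ.cfc_mul_cfc_eq fun x _ => by split_ifs <;> simp

theorem mul_cfc_inv : σ * hσ.1.cfc (·⁻¹) = hσ.supportProj := by
  refine hσ.mul_cfc_eq fun x hx => ?_
  rcases hx.lt_or_eq with hx | rfl
  · simp [hx, hx.ne']
  · simp

theorem cfc_mul_supportProj {f : ℝ → ℝ} (hf : f 0 = 0) :
    hσ.1.cfc f * hσ.supportProj = hσ.1.cfc f :=
  hσ.cfc_mul_cfc_eq fun x hx => by rcases hx.lt_or_eq with hx | rfl <;> simp [*]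

theorem eq_of_mul_eq_mul {M₁ M₂ : Matrix n n 𝕜} (h₁ : M₁ * hσ.supportProj = M₁)
    (h₂ : M₂ * hσ.supportProj = M₂) (h : M₁ * σ = M₂ * σ) : M₁ = M₂ := by
  rw [← h₁, ← h₂, ← hσ.mul_cfc_inv, ← mul_assoc, ← mul_assoc, h]

theorem eq_of_trace_mul_eq {M₁ M₂ : Matrix n n 𝕜} (h₁ : M₁ * hσ.supportProj = M₁)
    (h₂ : M₂ * hσ.supportProj = M₂)
    (h : ∀ B, (σ * B * M₁).trace = (σ * B * M₂).trace) : M₁ = M₂ := by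
  refine hσ.eq_of_mul_eq_mul h₁ h₂ (ext_iff_trace_mul_left.mpr fun B => ?_)
  rw [← mul_assoc, ← mul_assoc, trace_mul_cycle, h, ← trace_mul_cycle]

theorem trace_mul_supportProj_sandwich (B M : Matrix n n 𝕜) :
    (σ * B * (hσ.supportProj * M * hσ.supportProj)).trace =
      (σ * (hσ.supportProj * B * hσ.supportProj) * M).trace := by
  simp only [← mul_assoc, hσ.mul_supportProj]
  rw [trace_mul_comm]
  simp only [← mul_assoc, hσ.supportProj_mul_self]

theorem trace_mul_pinvSqrt_sandwich (B M : Matrix n n 𝕜) :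
    (σ * B * (hσ.1.cfc pinvSqrt * M * hσ.1.cfc pinvSqrt)).trace =
      (hσ.1.cfc Real.sqrt * B * hσ.1.cfc pinvSqrt * M).trace := by
  simp only [← mul_assoc]
  rw [trace_mul_comm]
  simp only [← mul_assoc, hσ.cfc_mul_eq fun x hx => pinvSqrt_mul_self hx]

theorem mul_map_supportProj_sandwich {m : Type*} [Fintype m] [DecidableEq m]
    {ρ : Matrix m m 𝕜} (hρ : ρ.PosSemidef) (F : Matrix n n 𝕜 →ₗ[𝕜] Matrix m m 𝕜)
    (hAC : ∀ B, F (σ * (hσ.supportProj * B * hσ.supportProj)) * ρ =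
      ρ * F (hσ.supportProj * B * hσ.supportProj * σ)) (B : Matrix n n 𝕜) :
    ρ * F (hσ.supportProj * B * hσ.supportProj) =
      hρ.sqrt * F (hσ.1.cfc Real.sqrt * B * hσ.1.cfc pinvSqrt) * hρ.sqrt := by
  let φ := LinearMap.mulLeft 𝕜 ρ ∘ₗ F ∘ₗ LinearMap.mulLeft 𝕜 hσ.supportProj ∘ₗ
    LinearMap.mulRight 𝕜 hσ.supportProj
  let ψ := LinearMap.mulLeft 𝕜 hρ.sqrt ∘ₗ LinearMap.mulRight 𝕜 hρ.sqrt ∘ₗ F ∘ₗ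
    LinearMap.mulLeft 𝕜 (hσ.1.cfc Real.sqrt) ∘ₗ LinearMap.mulRight 𝕜 (hσ.1.cfc pinvSqrt)
  suffices φ = ψ by simpa [φ, ψ, mul_assoc] using LinearMap.congr_fun this B
  refine hσ.1.linearMap_ext_eigenUnit fun a b => ?_
  simp only [φ, ψ, LinearMap.comp_apply, LinearMap.mulLeft_apply, LinearMap.mulRight_apply,
    ← mul_assoc, supportProj, IsHermitian.cfc_mul_eigenUnit_mul_cfc]
  by_cases hab : 0 < hσ.1.eigenvalues a ∧ 0 < hσ.1.eigenvalues b
  · obtain ⟨ha, hb⟩ := hab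
    have hPEP : hσ.supportProj * hσ.1.eigenUnit a b * hσ.supportProj = hσ.1.eigenUnit a b := by
      simp [supportProj, IsHermitian.cfc_mul_eigenUnit_mul_cfc, ha, hb]
    have hE : ρ * F (hσ.1.eigenUnit a b) =
        ((hσ.1.eigenvalues a / hσ.1.eigenvalues b : ℝ) : 𝕜) •
          (F (hσ.1.eigenUnit a b) * ρ) := by
      have h := hAC (hσ.1.eigenUnit a b)
      rw [hPEP, hσ.1.mul_eigenUnit, hσ.1.eigenUnit_mul, map_smul, map_smul, smul_mul_assoc,
        mul_smul_comm] at h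
      rw [RCLike.ofReal_div, div_eq_inv_mul, mul_smul, h, smul_smul,
        inv_mul_cancel₀ (RCLike.ofReal_ne_zero.mpr hb.ne'), one_smul]
    rw [if_pos ha, if_pos hb, RCLike.ofReal_one, mul_one, one_smul,
      hρ.mul_eq_sqrt_smul_sqrt_mul_mul_sqrt (div_nonneg ha.le hb.le) hE, map_smul,
      ← sqrt_mul_pinvSqrt _ hb]
    simp
  · have hzero : hσ.1.eigenvalues a = 0 ∨ hσ.1.eigenvalues b = 0 := by
      rw [not_and_or, not_lt, not_lt] at hab
      exact hab.imp (le_antisymm · (hσ.eigenvalues_nonneg a))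
        (le_antisymm · (hσ.eigenvalues_nonneg b))
    rcases hzero with h | h <;> simp [h, pinvSqrt_zero]

end PosSemidef

end Matrix

theorem IsSupportProj.eq_supportProj {n : Type*} [Fintype n] [DecidableEq n]
    {Q σ : Matrix n n ℂ} (hQ : IsSupportProj Q σ) (hσ : σ.PosSemidef) :
    Q = hσ.supportProj := by
  obtain ⟨hQh, hQidem, hQrange⟩ := hQ
  refine hQh.eq_of_range_mulVecLin_eq (hσ.1.isHermitian_cfc _) hQidem
    hσ.isIdempotentElem_supportProj (hQrange.trans (le_antisymm ?_ ?_))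
  · conv_lhs => rw [← hσ.supportProj_mul_self]
    rw [mulVecLin_mul]
    exact LinearMap.range_comp_le_range _ _
  · conv_lhs => rw [← hσ.mul_cfc_inv]
    rw [mulVecLin_mul]
    exact LinearMap.range_comp_le_range _ _

theorem stmt_16_general (n m : ℕ)
    (F : Matrix (Fin n) (Fin n) ℂ →ₗ[ℂ] Matrix (Fin m) (Fin m) ℂ)
    (hFcp : IsCP (⇑F))
    (ρ : Matrix (Fin m) (Fin m) ℂ) (hρ : ρ.PosSemidef)
    (σ : Matrix (Fin n) (Fin n) ℂ) (hσps : σ.PosSemidef)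
    (Q : Matrix (Fin n) (Fin n) ℂ) (hQ : IsSupportProj Q σ)
    (Fd : Matrix (Fin m) (Fin m) ℂ →ₗ[ℂ] Matrix (Fin n) (Fin n) ℂ)
    (hFd : ∀ (A : Matrix (Fin m) (Fin m) ℂ) (B : Matrix (Fin n) (Fin n) ℂ),
      ((F B)ᴴ * A).trace = (Bᴴ * Fd A).trace)
    (Gright : Matrix (Fin m) (Fin m) ℂ →ₗ[ℂ] Matrix (Fin n) (Fin n) ℂ)
    (hGR : ∀ (A : Matrix (Fin m) (Fin m) ℂ) (B : Matrix (Fin n) (Fin n) ℂ),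
      (ρ * F B * A).trace = (σ * B * Gright A).trace)
    (hAC : ∀ B : Matrix (Fin n) (Fin n) ℂ,
      F (σ * (Q * B * Q)) * ρ = ρ * F ((Q * B * Q) * σ)) :
    ∀ A : Matrix (Fin m) (Fin m) ℂ,
      Q * Gright A * Q =
        (hσps.isHermitian.cfc fun x : ℝ => if 0 < x then x ^ (-(1 : ℝ) / 2) else 0) *
          Fd (hρ.sqrt * A * hρ.sqrt) *
        (hσps.isHermitian.cfc fun x : ℝ => if 0 < x then x ^ (-(1 : ℝ) / 2) else 0) := by
  intro A
  have hFstar : ∀ C, F Cᴴ = (F C)ᴴ :=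
    map_conjTranspose_of_posSemidef fun X hX => hFcp.posSemidef_apply hX
  have hFd' : ∀ X Y, (X * Fd Y).trace = (F X * Y).trace := fun X Y => by
    simpa [hFstar] using (hFd Y Xᴴ).symm
  obtain rfl := hQ.eq_supportProj hσps
  change _ = hσps.1.cfc pinvSqrt * _ * hσps.1.cfc pinvSqrt
  refine hσps.eq_of_trace_mul_eq ?_ ?_ fun B => ?_
  · rw [mul_assoc _ hσps.supportProj, hσps.isIdempotentElem_supportProj.eq]
  · rw [mul_assoc _ (hσps.1.cfc pinvSqrt), hσps.cfc_mul_supportProj pinvSqrt_zero]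
  calc (σ * B * (hσps.supportProj * Gright A * hσps.supportProj)).trace
      = (ρ * F (hσps.supportProj * B * hσps.supportProj) * A).trace := by
        rw [hσps.trace_mul_supportProj_sandwich, hGR]
    _ = (hρ.sqrt * F (hσps.1.cfc Real.sqrt * B * hσps.1.cfc pinvSqrt) * hρ.sqrt * A).trace := by
        rw [hσps.mul_map_supportProj_sandwich hρ F hAC]
    _ = (hσps.1.cfc Real.sqrt * B * hσps.1.cfc pinvSqrt *
          Fd (hρ.sqrt * A * hρ.sqrt)).trace := by
        rw [hFd', mul_assoc, mul_assoc, trace_mul_comm]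
        simp only [mul_assoc]
    _ = _ := (hσps.trace_mul_pinvSqrt_sandwich _ _).symm

/-- Under the equivalent conditions of the non-commutative Bayes theorem
(e.g. `F(σ·QBQ)·ρ = ρ·F(QBQ·σ)`), the compressed right Bayes map is given by the Petz-like
formula `Q·G^R(A)·Q = g(σ)·F†(√ρ·A·√ρ)·g(σ)`, where `g(σ)` is obtained by applying
`g(x) = x^{-1/2}` (for `x > 0`, `g(0) = 0`) to `σ` via the functional calculus for
Hermitian matrices. -/
theorem stmt_16 (n m : ℕ)
    (F : Matrix (Fin n) (Fin n) ℂ →ₗ[ℂ] Matrix (Fin m) (Fin m) ℂ)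
    (hFcp : IsCP (⇑F)) (hFunital : F 1 = 1)
    (ρ : Matrix (Fin m) (Fin m) ℂ) (hρ : ρ.PosSemidef) (hρtr : ρ.trace = 1)
    (σ : Matrix (Fin n) (Fin n) ℂ) (hσps : σ.PosSemidef) (hσtr : σ.trace = 1)
    (hσ : ∀ B : Matrix (Fin n) (Fin n) ℂ, (σ * B).trace = (ρ * F B).trace)
    (Q : Matrix (Fin n) (Fin n) ℂ) (hQ : IsSupportProj Q σ)
    (Fd : Matrix (Fin m) (Fin m) ℂ →ₗ[ℂ] Matrix (Fin n) (Fin n) ℂ)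
    (hFd : ∀ (A : Matrix (Fin m) (Fin m) ℂ) (B : Matrix (Fin n) (Fin n) ℂ),
      ((F B)ᴴ * A).trace = (Bᴴ * Fd A).trace)
    (Gright : Matrix (Fin m) (Fin m) ℂ →ₗ[ℂ] Matrix (Fin n) (Fin n) ℂ) (hGRu : Gright 1 = 1)
    (hGR : ∀ (A : Matrix (Fin m) (Fin m) ℂ) (B : Matrix (Fin n) (Fin n) ℂ),
      (ρ * F B * A).trace = (σ * B * Gright A).trace)
    (hAC : ∀ B : Matrix (Fin n) (Fin n) ℂ,
      F (σ * (Q * B * Q)) * ρ = ρ * F ((Q * B * Q) * σ)) :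
    ∀ A : Matrix (Fin m) (Fin m) ℂ,
      Q * Gright A * Q =
        (hσps.isHermitian.cfc fun x : ℝ => if 0 < x then x ^ (-(1 : ℝ) / 2) else 0) *
          Fd (hρ.sqrt * A * hρ.sqrt) *
        (hσps.isHermitian.cfc fun x : ℝ => if 0 < x then x ^ (-(1 : ℝ) / 2) else 0) :=
  stmt_16_general n m F hFcp ρ hρ σ hσps Q hQ Fd hFd Gright hGR hAC
end

section
/- Let k, n ≥ 1, let Q ∈ M_n(ℂ) and R ∈ M_{kn}(ℂ) ≅ M_k(ℂ)⊗M_n(ℂ) be orthogonal projections (Hermitian idempotents) with R ≤ 1_k⊗Q, and suppose the unital corner map from Q·M_n(ℂ)·Q to R·M_{kn}(ℂ)·R sending Y ↦ R(1_k⊗Y)R is multiplicative: R(1_k⊗Y)R(1_k⊗Y')R = R(1_k⊗YY')R for all Y, Y' ∈ Q·M_n(ℂ)·Q. Then there exists an orthogonal projection T ∈ M_k(ℂ) such that R = T⊗Q, and consequently R(1_k⊗Y)R = T⊗Y for all Y ∈ Q·M_n(ℂ)·Q. -/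
/-!
A projection `R ≤ 1 ⊗ Q` satisfies `(1 ⊗ Q) R = R`. Multiplicativity of the compression
`y ↦ R y R` on `y = 1 ⊗ Y` gives `‖(1 - R) y R‖² = ‖R (y* y) R - R y* R y R‖ = 0`, so
`R` commutes with `1 ⊗ Y` for every `Y ∈ Q M_n Q`. Testing this commutation against the
matrix units `Y = Q E_cd Q` yields `Q a c · R (i,d) (j,b) = R (i,a) (j,c) · Q d b`, which
says that the `n × n` blocks of `R` are all multiples of `Q`, i.e. `R = T ⊗ Q`.
-/

open Matrix Kronecker ComplexOrder

namespace Matrix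

section Field

variable {K l m : Type*} [Field K]

theorem eq_kronecker_of_mul_apply_eq_mul_apply {Q : Matrix m m K}
    {X : Matrix (l × m) (l × m) K} {a₀ b₀ : m} (hQ : Q a₀ b₀ ≠ 0)
    (h : ∀ i j a b c d, Q a c * X (i, d) (j, b) = X (i, a) (j, c) * Q d b) :
    X = (of fun i j => X (i, a₀) (j, b₀) / Q a₀ b₀) ⊗ₖ Q := by
  ext ⟨i, a⟩ ⟨j, b⟩
  rw [kroneckerMap_apply, of_apply, div_mul_eq_mul_div, eq_div_iff hQ]
  exact (mul_comm _ _).trans (h i j a₀ b b₀ a)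

theorem kronecker_left_injective {Q : Matrix m m K} (hQ : Q ≠ 0) :
    Function.Injective fun T : Matrix l l K => T ⊗ₖ Q := by
  obtain ⟨a, hQa⟩ := Function.ne_iff.mp hQ
  obtain ⟨b, hQab⟩ := Function.ne_iff.mp hQa
  intro T T' h
  ext i j
  exact mul_right_cancel₀ hQab (congrFun (congrFun h (i, a)) (j, b))

end Field

section OneKronecker

variable {α l m n : Type*} [Fintype l] [Fintype m] [DecidableEq l]

theorem one_kronecker_mul [CommSemiring α] (A B : Matrix m m α) :
    (1 : Matrix l l α) ⊗ₖ (A * B) =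
      (1 : Matrix l l α) ⊗ₖ A * (1 : Matrix l l α) ⊗ₖ B := by
  rw [← mul_kronecker_mul, one_mul]

theorem one_kronecker_mul_apply [NonAssocSemiring α] (A : Matrix m m α)
    (X : Matrix (l × m) n α) (i : l) (a : m) (q : n) :
    ((1 : Matrix l l α) ⊗ₖ A * X) (i, a) q = ∑ e, A a e * X (i, e) q := by
  simp [mul_apply, Fintype.sum_prod_type, one_apply, ite_mul]

theorem mul_one_kronecker_apply [NonAssocSemiring α] (X : Matrix n (l × m) α) (A : Matrix m m α)
    (p : n) (j : l) (b : m) :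
    (X * (1 : Matrix l l α) ⊗ₖ A) p (j, b) = ∑ e, X p (j, e) * A e b := by
  simp [mul_apply, Fintype.sum_prod_type, one_apply, mul_ite]

theorem mul_apply_eq_mul_apply_of_commute_one_kronecker [DecidableEq m] [CommSemiring α]
    {Q : Matrix m m α} {X : Matrix (l × m) (l × m) α}
    (hQX : (1 : Matrix l l α) ⊗ₖ Q * X = X) (hXQ : X * (1 : Matrix l l α) ⊗ₖ Q = X)
    (hcomm : ∀ E, Commute ((1 : Matrix l l α) ⊗ₖ (Q * E * Q)) X) (i j : l) (a b c d : m) :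
    Q a c * X (i, d) (j, b) = X (i, a) (j, c) * Q d b := by
  set E : Matrix m m α := single c d 1
  have hL : (1 : Matrix l l α) ⊗ₖ (Q * E * Q) * X =
      (1 : Matrix l l α) ⊗ₖ (Q * E) * X := by
    rw [one_kronecker_mul (Q * E), mul_assoc, hQX]
  have hR : X * (1 : Matrix l l α) ⊗ₖ (Q * E * Q) =
      X * (1 : Matrix l l α) ⊗ₖ (E * Q) := by
    rw [mul_assoc Q, one_kronecker_mul Q, ← mul_assoc, hXQ]
  have h := congrFun (congrFun (hL.symm.trans ((hcomm E).eq.trans hR)) (i, a)) (j, b)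
  simp only [one_kronecker_mul_apply, mul_one_kronecker_apply] at h
  simpa [E, mul_apply, single_apply, ite_and] using h

end OneKronecker

end Matrix

namespace IsStarProjection

section CStarRing

variable {A : Type*} [NormedRing A] [StarRing A] [CStarRing A] {r y : A}

theorem mul_eq_mul_mul_of_compression_mul (hr : IsStarProjection r)
    (h : r * star y * r * y * r = r * (star y * y) * r) : y * r = r * y * r := by
  have hr' : star r = r := hr.isSelfAdjoint.star_eq
  have hx : star ((1 - r) * y * r) * ((1 - r) * y * r) = 0 :=
    calc star ((1 - r) * y * r) * ((1 - r) * y * r)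
        = r * star y * ((1 - r) * (1 - r)) * y * r := by
          simp only [star_mul, star_sub, star_one, hr']; noncomm_ring
      _ = r * (star y * y) * r - r * star y * r * y * r := by
          rw [hr.one_sub.isIdempotentElem.eq]; noncomm_ring
      _ = 0 := by rw [h, sub_self]
  rw [← sub_eq_zero, ← (CStarRing.star_mul_self_eq_zero_iff _).mp hx]
  noncomm_ring

theorem commute_of_compression_mul (hr : IsStarProjection r)
    (h : r * star y * r * y * r = r * (star y * y) * r)
    (h' : r * y * r * star y * r = r * (y * star y) * r) : Commute y r := by
  have hry := congr_arg star <|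
    hr.mul_eq_mul_mul_of_compression_mul (y := star y) (by rwa [star_star])
  simp only [star_mul, star_star, hr.isSelfAdjoint.star_eq, ← mul_assoc] at hry
  exact (hr.mul_eq_mul_mul_of_compression_mul h).trans hry.symm

end CStarRing

open scoped MatrixOrder Matrix.Norms.L2Operator in
theorem mul_eq_right_of_posSemidef_sub {m : Type*} [Fintype m] [DecidableEq m]
    {P R : Matrix m m ℂ} (hR : IsStarProjection R) (hP : IsStarProjection P)
    (h : (P - R).PosSemidef) : P * R = R :=
  (hR.le_iff_mul_eq_right hP).mp h

section Kronecker

variable {R l m : Type*} [Fintype l] [Fintype m]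

theorem kronecker [CommSemiring R] [StarRing R] {T : Matrix l l R} {Q : Matrix m m R}
    (hT : IsStarProjection T) (hQ : IsStarProjection Q) : IsStarProjection (T ⊗ₖ Q) where
  isIdempotentElem := by
    rw [IsIdempotentElem, ← mul_kronecker_mul, hT.isIdempotentElem.eq, hQ.isIdempotentElem.eq]
  isSelfAdjoint := by
    rw [IsSelfAdjoint, star_eq_conjTranspose, conjTranspose_kronecker]
    exact congr_arg₂ (· ⊗ₖ ·) hT.isSelfAdjoint.star_eq hQ.isSelfAdjoint.star_eq

theorem one_kronecker [CommSemiring R] [StarRing R] [DecidableEq l] {Q : Matrix m m R}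
    (hQ : IsStarProjection Q) : IsStarProjection ((1 : Matrix l l R) ⊗ₖ Q) :=
  (IsStarProjection.one _).kronecker hQ

theorem of_kronecker [Field R] [StarRing R] {T : Matrix l l R} {Q : Matrix m m R}
    (hQ : IsStarProjection Q) (hQ0 : Q ≠ 0) (h : IsStarProjection (T ⊗ₖ Q)) :
    IsStarProjection T where
  isIdempotentElem := kronecker_left_injective hQ0 <| by
    simpa only [← mul_kronecker_mul, hQ.isIdempotentElem.eq] using h.isIdempotentElem.eq
  isSelfAdjoint := kronecker_left_injective hQ0 <| by
    have hQ' : Qᴴ = Q := hQ.isSelfAdjoint.star_eq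
    simpa only [star_eq_conjTranspose, conjTranspose_kronecker, hQ'] using h.isSelfAdjoint.star_eq

theorem exists_eq_kronecker_of_commute [DecidableEq l] [DecidableEq m] [Field R] [StarRing R]
    {Q : Matrix m m R} {P : Matrix (l × m) (l × m) R}
    (hQ : IsStarProjection Q) (hP : IsStarProjection P) (hQP : (1 : Matrix l l R) ⊗ₖ Q * P = P)
    (hcomm : ∀ E, Commute ((1 : Matrix l l R) ⊗ₖ (Q * E * Q)) P) :
    ∃ T, IsStarProjection T ∧ P = T ⊗ₖ Q := by
  by_cases hQ0 : Q = 0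
  · refine ⟨0, .zero _, ?_⟩
    rw [← hQP, hQ0]
    simp
  have hPQ : P * (1 : Matrix l l R) ⊗ₖ Q = P := by
    simpa [hP.isSelfAdjoint.star_eq, (one_kronecker (l := l) hQ).isSelfAdjoint.star_eq] using
      congr_arg star hQP
  obtain ⟨a₀, hQa₀⟩ := Function.ne_iff.mp hQ0
  obtain ⟨b₀, hQab⟩ := Function.ne_iff.mp hQa₀
  have hP_eq := eq_kronecker_of_mul_apply_eq_mul_apply hQab
    (mul_apply_eq_mul_apply_of_commute_one_kronecker hQP hPQ hcomm)
  exact ⟨_, hQ.of_kronecker hQ0 (hP_eq ▸ hP), hP_eq⟩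

end Kronecker

open scoped Matrix.Norms.L2Operator in
theorem commute_one_kronecker_of_compression_mul {𝕜 l m : Type*} [RCLike 𝕜] [Fintype l]
    [Fintype m] [DecidableEq l] [DecidableEq m] {Q : Matrix m m 𝕜}
    {R : Matrix (l × m) (l × m) 𝕜} (hR : IsStarProjection R) (hQ : Qᴴ = Q)
    (hmul : ∀ E E' : Matrix m m 𝕜,
      R * (1 : Matrix l l 𝕜) ⊗ₖ (Q * E * Q) * R *
          (1 : Matrix l l 𝕜) ⊗ₖ (Q * E' * Q) * R =
        R * (1 : Matrix l l 𝕜) ⊗ₖ (Q * E * Q * (Q * E' * Q)) * R)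
    (E : Matrix m m 𝕜) : Commute ((1 : Matrix l l 𝕜) ⊗ₖ (Q * E * Q)) R := by
  have hstar (E : Matrix m m 𝕜) : star ((1 : Matrix l l 𝕜) ⊗ₖ (Q * E * Q)) =
      (1 : Matrix l l 𝕜) ⊗ₖ (Q * Eᴴ * Q) := by
    rw [star_eq_conjTranspose, conjTranspose_kronecker, conjTranspose_one, conjTranspose_mul,
      conjTranspose_mul, hQ, mul_assoc]
  refine hR.commute_of_compression_mul ?_ ?_ <;>
    rw [hstar, ← one_kronecker_mul] <;> exact hmul _ _

end IsStarProjection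

theorem stmt_18_general (k n : ℕ)
    (Q : Matrix (Fin n) (Fin n) ℂ) (hQherm : Qᴴ = Q) (hQidem : Q * Q = Q)
    (R : Matrix (Fin k × Fin n) (Fin k × Fin n) ℂ) (hRherm : Rᴴ = R) (hRidem : R * R = R)
    (hRQ : (((1 : Matrix (Fin k) (Fin k) ℂ) ⊗ₖ Q) - R).PosSemidef)
    (hmul : ∀ Y Y' : Matrix (Fin n) (Fin n) ℂ,
      (∃ B, Y = Q * B * Q) → (∃ B', Y' = Q * B' * Q) →
      R * ((1 : Matrix (Fin k) (Fin k) ℂ) ⊗ₖ Y) * R *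
          ((1 : Matrix (Fin k) (Fin k) ℂ) ⊗ₖ Y') * R
        = R * ((1 : Matrix (Fin k) (Fin k) ℂ) ⊗ₖ (Y * Y')) * R) :
    ∃ T : Matrix (Fin k) (Fin k) ℂ, Tᴴ = T ∧ T * T = T ∧ R = T ⊗ₖ Q ∧
      ∀ Y : Matrix (Fin n) (Fin n) ℂ, (∃ B, Y = Q * B * Q) →
        R * ((1 : Matrix (Fin k) (Fin k) ℂ) ⊗ₖ Y) * R = T ⊗ₖ Y := by
  have hQ : IsStarProjection Q := ⟨hQidem, hQherm⟩
  have hR : IsStarProjection R := ⟨hRidem, hRherm⟩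
  have hQR := hR.mul_eq_right_of_posSemidef_sub hQ.one_kronecker hRQ
  have hcomm := hR.commute_one_kronecker_of_compression_mul hQherm fun E E' =>
    hmul _ _ ⟨E, rfl⟩ ⟨E', rfl⟩
  obtain ⟨T, hT, rfl⟩ := hQ.exists_eq_kronecker_of_commute hR hQR hcomm
  refine ⟨T, hT.isSelfAdjoint, hT.isIdempotentElem, rfl, ?_⟩
  rintro _ ⟨B, rfl⟩
  rw [← mul_kronecker_mul, ← mul_kronecker_mul, mul_one, hT.isIdempotentElem.eq, ← mul_assoc,
    ← mul_assoc, hQidem, mul_assoc _ Q Q, hQidem]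

/-- If `Q ∈ M_n(ℂ)` and `R ∈ M_{kn}(ℂ)` are orthogonal projections with
`R ≤ 1_k ⊗ Q` (Loewner order) and the unital corner map `Y ↦ R(1_k ⊗ Y)R` from
`Q·M_n(ℂ)·Q` to `R·M_{kn}(ℂ)·R` is multiplicative, then `R = T ⊗ Q` for some orthogonal
projection `T ∈ M_k(ℂ)`, and consequently `R(1_k ⊗ Y)R = T ⊗ Y` for all
`Y ∈ Q·M_n(ℂ)·Q`. -/
theorem stmt_18 (k n : ℕ) (hk : 1 ≤ k) (hn : 1 ≤ n)
    (Q : Matrix (Fin n) (Fin n) ℂ) (hQherm : Qᴴ = Q) (hQidem : Q * Q = Q)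
    (R : Matrix (Fin k × Fin n) (Fin k × Fin n) ℂ) (hRherm : Rᴴ = R) (hRidem : R * R = R)
    (hRQ : (((1 : Matrix (Fin k) (Fin k) ℂ) ⊗ₖ Q) - R).PosSemidef)
    (hmul : ∀ Y Y' : Matrix (Fin n) (Fin n) ℂ,
      (∃ B, Y = Q * B * Q) → (∃ B', Y' = Q * B' * Q) →
      R * ((1 : Matrix (Fin k) (Fin k) ℂ) ⊗ₖ Y) * R *
          ((1 : Matrix (Fin k) (Fin k) ℂ) ⊗ₖ Y') * R
        = R * ((1 : Matrix (Fin k) (Fin k) ℂ) ⊗ₖ (Y * Y')) * R) :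
    ∃ T : Matrix (Fin k) (Fin k) ℂ, Tᴴ = T ∧ T * T = T ∧ R = T ⊗ₖ Q ∧
      ∀ Y : Matrix (Fin n) (Fin n) ℂ, (∃ B, Y = Q * B * Q) →
        R * ((1 : Matrix (Fin k) (Fin k) ℂ) ⊗ₖ Y) * R = T ⊗ₖ Y :=
  stmt_18_general k n Q hQherm hQidem R hRherm hRidem hRQ hmul
end
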